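/- arXiv:1305.0448 — 11 statements merged into one kernel-verified Lean document; each statement's English description precedes it below -/
import Mathlib

section
/- If (S,T,U) is a triple of nonempty subsets of a group G satisfying the Triple Product Property, then for every permutation π of {S,T,U}, the triple (π(S),π(T),π(U)) also satisfies the Triple Product Property. -/
/-- The right quotient `Q(X) = {x y⁻¹ : x, y ∈ X}` of a subset of a group. -/
def rightQuotient {G : Type*} [Group G] (X : Set G) : Set G :=
  {g | ∃ x ∈ X, ∃ y ∈ X, g = x * y⁻¹}

/-- Subsets `S, T, U` of a group satisfy the Triple Product Property if for all
`s ∈ Q(S)`, `t ∈ Q(T)`, `u ∈ Q(U)`, `s * t * u = 1` iff `s = t = u = 1`. -/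
def TPP {G : Type*} [Group G] (S T U : Set G) : Prop :=
  ∀ s ∈ rightQuotient S, ∀ t ∈ rightQuotient T, ∀ u ∈ rightQuotient U,
    (s * t * u = 1 ↔ s = 1 ∧ t = 1 ∧ u = 1)

lemma rq_inv {G : Type*} [Group G] {X : Set G} {s : G} (hs : s ∈ rightQuotient X) :
    s⁻¹ ∈ rightQuotient X := by
  obtain ⟨x, hx, y, hy, rfl⟩ := hs
  exact ⟨y, hy, x, hx, by group⟩

lemma tpp_cyc {G : Type*} [Group G] {S T U : Set G} (h : TPP S T U) : TPP T U S := by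
  intro t ht u hu s hs
  have := h s hs t ht u hu
  constructor
  · intro he
    have : s * t * u = 1 := by
      calc s * t * u = s * (t * u * s) * s⁻¹ := by group
        _ = 1 := by rw [he]; group
    obtain ⟨h1, h2, h3⟩ := (h s hs t ht u hu).mp this
    exact ⟨h2, h3, h1⟩
  · rintro ⟨rfl, rfl, rfl⟩; group

lemma tpp_rev {G : Type*} [Group G] {S T U : Set G} (h : TPP S T U) : TPP U T S := by
  intro u hu t ht s hs
  constructor
  · intro he
    have : s⁻¹ * t⁻¹ * u⁻¹ = 1 := by
      calc s⁻¹ * t⁻¹ * u⁻¹ = (u * t * s)⁻¹ := by group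
        _ = 1 := by rw [he]; group
    obtain ⟨h1, h2, h3⟩ := (h _ (rq_inv hs) _ (rq_inv ht) _ (rq_inv hu)).mp this
    refine ⟨by simpa using congrArg (·⁻¹) h3, by simpa using congrArg (·⁻¹) h2,
      by simpa using congrArg (·⁻¹) h1⟩
  · rintro ⟨rfl, rfl, rfl⟩; group

theorem stmt_0 {G : Type*} [Group G] (v : Fin 3 → Set G)
    (hne : ∀ i, (v i).Nonempty) (h : TPP (v 0) (v 1) (v 2)) :
    ∀ π : Equiv.Perm (Fin 3), TPP (v (π 0)) (v (π 1)) (v (π 2)) := by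
  intro π
  have h012 := h
  have h120 := tpp_cyc h012
  have h201 := tpp_cyc h120
  have h210 := tpp_rev h012
  have h021 := tpp_cyc h210
  have h102 := tpp_cyc h021
  fin_cases π <;> simp_all [Equiv.Perm.decomposeFin] <;>
    first
      | exact h012 | exact h120 | exact h201 | exact h210 | exact h021 | exact h102
end

section
/- If G is a finite non-abelian group, then the number of conjugacy classes of G is at most (5/8)|G|, and equality implies |G : Z(G)| = 4. -/
open ConjClasses

theorem stmt_6 {G : Type*} [Group G] [Fintype G]
    (hna : ∃ a b : G, a * b ≠ b * a) :
    8 * Nat.card (ConjClasses G) ≤ 5 * Nat.card G ∧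
    (8 * Nat.card (ConjClasses G) = 5 * Nat.card G →
      (Subgroup.center G).index = 4) := by
  classical
  obtain ⟨a, b, hab⟩ := hna
  set Z := Subgroup.center G
  -- the quotient by the center is not cyclic
  have hncyc : ¬ IsCyclic (G ⧸ Z) := by
    intro h
    exact hab (commutative_of_cyclic_center_quotient (QuotientGroup.mk' Z)
      (by simp [QuotientGroup.ker_mk', Z]) a b)
  -- index of the center is at least 4
  have hidx0 : Z.index ≠ 0 := Subgroup.index_ne_zero_of_finite
  have hidx : Z.index = Nat.card (G ⧸ Z) := rfl
  have hi4 : 4 ≤ Z.index := by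
    by_contra hlt
    push_neg at hlt
    interval_cases h : Z.index
    · exact hidx0 rfl
    · refine hncyc ?_
      have : Nat.card (G ⧸ Z) = 1 := by omega
      have : Subsingleton (G ⧸ Z) := Nat.card_eq_one_iff_unique.mp this |>.1
      infer_instance
    · have : Fact (Nat.Prime 2) := ⟨by norm_num⟩
      exact hncyc (isCyclic_of_prime_card (p := 2) (by rw [← hidx]))
    · have : Fact (Nat.Prime 3) := ⟨by norm_num⟩
      exact hncyc (isCyclic_of_prime_card (p := 3) (by rw [← hidx]))
  set n := Nat.card G with hn
  set z := Nat.card Z with hz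
  have hz0 : 0 < z := Nat.card_pos
  have hzi : z * Z.index = n := Subgroup.card_mul_index Z
  set S := (noncenter G).toFinset with hS
  -- class equation
  have hclass : z + ∑ x ∈ S, Nat.card x.carrier = n := by
    have := Group.nat_card_center_add_sum_card_noncenter_eq_card G
    rwa [← Set.coe_toFinset (noncenter G), finsum_mem_coe_finset] at this
  -- number of conjugacy classes = z + S.card
  have hk : Nat.card (ConjClasses G) = z + S.card := by
    have he : Fintype.card ((noncenter G)ᶜ : Set (ConjClasses G)) = z := by
      rw [hz, ← Nat.card_eq_fintype_card]
      exact (Nat.card_congr ((mk_bijOn G).equiv _)).symm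
    have hle : S.card ≤ Fintype.card (ConjClasses G) := Finset.card_le_univ _
    have hsplit : ((noncenter G)ᶜ).toFinset.card
        = Fintype.card (ConjClasses G) - S.card := by
      rw [Set.toFinset_compl, Finset.card_compl, hS]
    rw [← Set.toFinset_card, hsplit] at he
    rw [Nat.card_eq_fintype_card]
    omega
  -- each noncentral class has at least 2 elements
  have hbound : ∀ x ∈ S, 2 ≤ Nat.card x.carrier := by
    intro x hx
    rw [hS, Set.mem_toFinset, mem_noncenter] at hx
    have hfin : x.carrier.Finite := Set.toFinite _
    have h1 : 1 < x.carrier.ncard := (Set.one_lt_ncard hfin).mpr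
      (by obtain ⟨u, hu, v, hv, huv⟩ := hx; exact ⟨u, hu, v, hv, huv⟩)
    rwa [Set.ncard_eq_toFinset_card', Set.toFinset_card, ← Nat.card_eq_fintype_card] at h1
  have hsum2 : 2 * S.card ≤ ∑ x ∈ S, Nat.card x.carrier := by
    calc 2 * S.card = ∑ _x ∈ S, 2 := by rw [Finset.sum_const, smul_eq_mul, mul_comm]
    _ ≤ ∑ x ∈ S, Nat.card x.carrier := Finset.sum_le_sum hbound
  have h2k : 2 * Nat.card (ConjClasses G) ≤ n + z := by omega
  have h4z : 4 * z ≤ n := by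
    calc 4 * z = z * 4 := by ring
    _ ≤ z * Z.index := Nat.mul_le_mul_left z hi4
    _ = n := hzi
  constructor
  · omega
  · intro heq
    have hn4z : n ≤ 4 * z := by omega
    have : z * Z.index ≤ z * 4 := by omega
    have h4 : Z.index ≤ 4 := Nat.le_of_mul_le_mul_left this hz0
    omega
end

section
/- Let G be a group with a TPP triple (S,T,U), and H a subgroup of index 2 in G. Set S₀ = S ∩ H, T₀ = T ∩ H, U₀ = U ∩ H. If H is abelian, then |S₀⁻¹ T₀ U₀| = |S₀| · |T₀| · |U₀|. -/
theorem stmt_7 {G : Type*} [Group G] [Fintype G] (S T U : Set G) (h : TPP S T U)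
    (H : Subgroup G) (hidx : H.index = 2)
    (hab : ∀ x ∈ H, ∀ y ∈ H, x * y = y * x) :
    {g | ∃ a ∈ S ∩ (H : Set G), ∃ b ∈ T ∩ (H : Set G), ∃ c ∈ U ∩ (H : Set G),
        g = a⁻¹ * b * c}.ncard =
      (S ∩ (H : Set G)).ncard * (T ∩ (H : Set G)).ncard * (U ∩ (H : Set G)).ncard := by
  classical
  set S₀ := S ∩ (H : Set G)
  set T₀ := T ∩ (H : Set G)
  set U₀ := U ∩ (H : Set G)
  letI : CommGroup H := { (inferInstance : Group H) with
    mul_comm := fun x y => Subtype.ext (hab x x.2 y y.2) }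
  set f : G × G × G → G := fun p => p.1⁻¹ * p.2.1 * p.2.2 with hf
  have himg : {g | ∃ a ∈ S₀, ∃ b ∈ T₀, ∃ c ∈ U₀, g = a⁻¹ * b * c}
      = f '' (S₀ ×ˢ (T₀ ×ˢ U₀)) := by
    ext g
    simp only [Set.mem_setOf_eq, Set.mem_image, Set.mem_prod, Prod.exists, hf]
    constructor
    · rintro ⟨a, ha, b, hb, c, hc, rfl⟩; exact ⟨a, b, c, ⟨ha, hb, hc⟩, rfl⟩
    · rintro ⟨a, b, c, ⟨ha, hb, hc⟩, rfl⟩; exact ⟨a, ha, b, hb, c, hc, rfl⟩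
  have hinj : Set.InjOn f (S₀ ×ˢ (T₀ ×ˢ U₀)) := by
    rintro ⟨a, b, c⟩ ⟨⟨haS, haH⟩, ⟨hbS, hbH⟩, ⟨hcS, hcH⟩⟩
      ⟨a', b', c'⟩ ⟨⟨haS', haH'⟩, ⟨hbS', hbH'⟩, ⟨hcS', hcH'⟩⟩ heq
    simp only [hf] at heq
    -- work in H
    set A : H := ⟨a, haH⟩
    set B : H := ⟨b, hbH⟩
    set C : H := ⟨c, hcH⟩
    set A' : H := ⟨a', haH'⟩
    set B' : H := ⟨b', hbH'⟩
    set C' : H := ⟨c', hcH'⟩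
    have heqH : A⁻¹ * B * C = A'⁻¹ * B' * C' := Subtype.ext heq
    have key : (A' * A⁻¹) * (B * B'⁻¹) * (C * C'⁻¹) = 1 := by
      have e : (A' * A⁻¹) * (B * B'⁻¹) * (C * C'⁻¹)
          = (A⁻¹ * B * C) * (A'⁻¹ * B' * C')⁻¹ := by
        simp [mul_inv_rev, mul_assoc, mul_comm, mul_left_comm]
      rw [e, heqH, mul_inv_cancel]
    have keyG : (a' * a⁻¹) * (b * b'⁻¹) * (c * c'⁻¹) = 1 := by
      have := congrArg (Subtype.val) key
      simpa using this
    have := h (a' * a⁻¹) ⟨a', haS', a, haS, rfl⟩ (b * b'⁻¹) ⟨b, hbS, b', hbS', rfl⟩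
      (c * c'⁻¹) ⟨c, hcS, c', hcS', rfl⟩
    obtain ⟨h1, h2, h3⟩ := this.mp keyG
    have ea : a = a' := by
      have := mul_eq_one_iff_eq_inv.mp h1; rw [this]; simp
    have eb : b = b' := mul_inv_eq_one.mp h2
    have ec : c = c' := mul_inv_eq_one.mp h3
    simp [ea, eb, ec]
  rw [himg, Set.ncard_image_of_injOn hinj, ← Nat.card_coe_set_eq,
    Nat.card_congr (Equiv.Set.prod _ _), Nat.card_prod,
    Nat.card_congr (Equiv.Set.prod _ _), Nat.card_prod,
    Nat.card_coe_set_eq, Nat.card_coe_set_eq, Nat.card_coe_set_eq, mul_assoc]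
end

section
/- Let G be a group with a TPP triple (S,T,U) and H an abelian subgroup of index 2. Set S₁ = S ∖ H, T₁ = T ∖ H, U₀ = U ∩ H, and assume U₀ is nonempty with 1 ∈ U. Then |S₁⁻¹ T₁ U₀| ≥ |S₁| · |T₁|. -/
theorem stmt_8 {G : Type*} [Group G] [Fintype G] (S T U : Set G) (h : TPP S T U)
    (hb : (1 : G) ∈ S ∩ T ∩ U)
    (H : Subgroup G) (hidx : H.index = 2)
    (hab : ∀ x ∈ H, ∀ y ∈ H, x * y = y * x) :
    (S \ (H : Set G)).ncard * (T \ (H : Set G)).ncard ≤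
      {g | ∃ a ∈ S \ (H : Set G), ∃ b ∈ T \ (H : Set G), ∃ c ∈ U ∩ (H : Set G),
        g = a⁻¹ * b * c}.ncard := by
  classical
  set A := S \ (H : Set G)
  set B := T \ (H : Set G)
  set X := {g | ∃ a ∈ A, ∃ b ∈ B, ∃ c ∈ U ∩ (H : Set G), g = a⁻¹ * b * c}
  have h1U : (1 : G) ∈ U := hb.2
  have h1S : (1 : G) ∈ S := hb.1.1
  have h1T : (1 : G) ∈ T := hb.1.2
  have hc : (1 : G) ∈ U ∩ (H : Set G) := ⟨h1U, H.one_mem⟩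
  have hinj : Set.InjOn (fun p : G × G => p.1⁻¹ * p.2) (A ×ˢ B) := by
    rintro ⟨a, b⟩ ⟨ha, hb'⟩ ⟨a', b'⟩ ⟨ha', hb''⟩ heq
    simp only at heq
    have hs : a' * a⁻¹ ∈ rightQuotient S := ⟨a', ha'.1, a, ha.1, rfl⟩
    have ht : b * b'⁻¹ ∈ rightQuotient T := ⟨b, hb'.1, b', hb''.1, rfl⟩
    have hu : (1 : G) ∈ rightQuotient U := ⟨1, h1U, 1, h1U, by simp⟩
    have hmul : (a' * a⁻¹) * (b * b'⁻¹) * 1 = 1 := by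
      have h' : a⁻¹ * b = a'⁻¹ * b' := heq
      calc (a' * a⁻¹) * (b * b'⁻¹) * 1 = a' * (a⁻¹ * b) * b'⁻¹ := by group
        _ = a' * (a'⁻¹ * b') * b'⁻¹ := by rw [h']
        _ = 1 := by group
    have := (h _ hs _ ht _ hu).mp hmul
    obtain ⟨h1, h2, -⟩ := this
    have : a' = a := by
      have := mul_inv_eq_one.mp h1; exact this
    have hbb : b = b' := mul_inv_eq_one.mp h2
    simp [this, hbb]
  have himg : (fun p : G × G => p.1⁻¹ * p.2) '' (A ×ˢ B) ⊆ X := by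
    rintro g ⟨⟨a, b⟩, ⟨ha, hb'⟩, rfl⟩
    exact ⟨a, ha, b, hb', 1, hc, by simp⟩
  have hXfin : X.Finite := Set.toFinite X
  have hprod : (A ×ˢ B).ncard = A.ncard * B.ncard := by
    simp only [Set.ncard_eq_toFinset_card', Set.toFinset_prod, Finset.card_product]
  calc A.ncard * B.ncard = (A ×ˢ B).ncard := hprod.symm
    _ = ((fun p : G × G => p.1⁻¹ * p.2) '' (A ×ˢ B)).ncard :=
        (Set.ncard_image_of_injOn hinj).symm
    _ ≤ X.ncard := Set.ncard_le_ncard himg hXfin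
end

section
/- Let G be a group with a TPP triple (S,T,U) and H a subgroup of index 2 in G. Set S₁ = S ∖ H and U₁ = U ∖ H. Then |S₁⁻¹ U₁| = |S₁| · |U₁|. -/
lemma ncard_prod_aux {A B : Type*} (s : Set A) (t : Set B) (hs : s.Finite) (ht : t.Finite) :
    (s ×ˢ t).ncard = s.ncard * t.ncard := by
  classical
  have := hs.fintype
  have := ht.fintype
  rw [Set.ncard_eq_toFinset_card' s, Set.ncard_eq_toFinset_card' t,
    Set.ncard_eq_toFinset_card' (s ×ˢ t), Set.toFinset_prod, Finset.card_product]

theorem stmt_9 {G : Type*} [Group G] [Fintype G] (S T U : Set G) (h : TPP S T U)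
    (hb : (1 : G) ∈ S ∩ T ∩ U)
    (H : Subgroup G) (hidx : H.index = 2) :
    {g | ∃ a ∈ S \ (H : Set G), ∃ b ∈ U \ (H : Set G), g = a⁻¹ * b}.ncard =
      (S \ (H : Set G)).ncard * (U \ (H : Set G)).ncard := by
  classical
  set S₁ := S \ (H : Set G)
  set U₁ := U \ (H : Set G)
  have hset : {g | ∃ a ∈ S₁, ∃ b ∈ U₁, g = a⁻¹ * b}
      = (fun p : G × G => p.1⁻¹ * p.2) '' (S₁ ×ˢ U₁) := by
    ext g
    constructor
    · rintro ⟨a, ha, b, hb', rfl⟩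
      exact ⟨(a, b), ⟨ha, hb'⟩, rfl⟩
    · rintro ⟨⟨a, b⟩, ⟨ha, hb'⟩, rfl⟩
      exact ⟨a, ha, b, hb', rfl⟩
  have hinj : Set.InjOn (fun p : G × G => p.1⁻¹ * p.2) (S₁ ×ˢ U₁) := by
    rintro ⟨a, b⟩ ⟨ha, hb1⟩ ⟨a', b'⟩ ⟨ha', hb2⟩ heq
    simp only at heq
    have hs : a' * a⁻¹ ∈ rightQuotient S := ⟨a', ha'.1, a, ha.1, rfl⟩
    have ht : (1 : G) ∈ rightQuotient T := ⟨1, hb.1.2, 1, hb.1.2, by simp⟩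
    have hu : b * b'⁻¹ ∈ rightQuotient U := ⟨b, hb1.1, b', hb2.1, rfl⟩
    have key := (h _ hs _ ht _ hu).mp (by
      rw [mul_one]
      calc a' * a⁻¹ * (b * b'⁻¹) = a' * (a⁻¹ * b) * b'⁻¹ := by group
        _ = a' * (a'⁻¹ * b') * b'⁻¹ := by rw [heq]
        _ = 1 := by group)
    have h1 : a = a' := by
      have := key.1
      have : a' = a := by
        rw [mul_inv_eq_one] at this
        exact this
      exact this.symm
    have h2 : b = b' := by
      have := key.2.2
      rwa [mul_inv_eq_one] at this
    simp [h1, h2]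
  rw [hset, Set.ncard_image_of_injOn hinj,
    ncard_prod_aux _ _ (Set.toFinite _) (Set.toFinite _)]
end

section
/- Let G be a group with a TPP triple (S,T,U) and H an abelian subgroup of index 2. With S₀ = S∩H, T₀ = T∩H, U₀ = U∩H, S₁ = S∖H, T₁ = T∖H, the sets S₀⁻¹T₀U₀ and S₁⁻¹T₁U₀ are disjoint. -/
theorem stmt_10 {G : Type*} [Group G] [Fintype G] (S T U : Set G) (h : TPP S T U)
    (H : Subgroup G) (hidx : H.index = 2)
    (hab : ∀ x ∈ H, ∀ y ∈ H, x * y = y * x) :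
    Disjoint
      {g | ∃ a ∈ S ∩ (H : Set G), ∃ b ∈ T ∩ (H : Set G), ∃ c ∈ U ∩ (H : Set G),
        g = a⁻¹ * b * c}
      {g | ∃ a ∈ S \ (H : Set G), ∃ b ∈ T \ (H : Set G), ∃ c ∈ U ∩ (H : Set G),
        g = a⁻¹ * b * c} := by
  rw [Set.disjoint_left]
  rintro g ⟨a₀, ⟨ha₀S, ha₀H⟩, b₀, ⟨hb₀T, hb₀H⟩, c₀, ⟨hc₀U, hc₀H⟩, rfl⟩
  rintro ⟨a₁, ⟨ha₁S, ha₁H⟩, b₁, ⟨hb₁T, hb₁H⟩, c₁, ⟨hc₁U, hc₁H⟩, heq⟩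
  have hs : a₀ * a₁⁻¹ ∈ rightQuotient S := ⟨a₀, ha₀S, a₁, ha₁S, rfl⟩
  have ht : b₁ * b₀⁻¹ ∈ rightQuotient T := ⟨b₁, hb₁T, b₀, hb₀T, rfl⟩
  have hu : c₁ * c₀⁻¹ ∈ rightQuotient U := ⟨c₁, hc₁U, c₀, hc₀U, rfl⟩
  have e : a₁⁻¹ * b₁ = a₀⁻¹ * (b₀ * (c₀ * c₁⁻¹)) := by
    rw [show a₁⁻¹ * b₁ = a₁⁻¹ * b₁ * c₁ * c₁⁻¹ by group, ← heq]; group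
  have comm := hab b₀ hb₀H (c₀ * c₁⁻¹) (mul_mem hc₀H (inv_mem hc₁H))
  have key : (a₀ * a₁⁻¹) * (b₁ * b₀⁻¹) * (c₁ * c₀⁻¹) = 1 := by
    calc (a₀ * a₁⁻¹) * (b₁ * b₀⁻¹) * (c₁ * c₀⁻¹)
        = a₀ * (a₁⁻¹ * b₁) * (b₀⁻¹ * (c₁ * c₀⁻¹)) := by group
      _ = a₀ * (a₀⁻¹ * (b₀ * (c₀ * c₁⁻¹))) * (b₀⁻¹ * (c₁ * c₀⁻¹)) := by rw [e]
      _ = (b₀ * (c₀ * c₁⁻¹)) * (b₀⁻¹ * (c₁ * c₀⁻¹)) := by group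
      _ = ((c₀ * c₁⁻¹) * b₀) * (b₀⁻¹ * (c₁ * c₀⁻¹)) := by rw [comm]
      _ = 1 := by group
  obtain ⟨h1, -, -⟩ := (h _ hs _ ht _ hu).mp key
  have : a₀ = a₁ := by rwa [mul_inv_eq_one] at h1
  exact ha₁H (this ▸ ha₀H)
end

section
/- Let G be a group with a TPP triple (S,T,U) and H an abelian subgroup of index 2. With S₀ = S∩H, T₀ = T∩H, U₀ = U∩H, S₁ = S∖H, U₁ = U∖H, the sets S₀⁻¹T₀U₀ and S₁⁻¹U₁T₀ are disjoint. -/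
theorem stmt_11 {G : Type*} [Group G] [Fintype G] (S T U : Set G) (h : TPP S T U)
    (H : Subgroup G) (hidx : H.index = 2)
    (hab : ∀ x ∈ H, ∀ y ∈ H, x * y = y * x) :
    Disjoint
      {g | ∃ a ∈ S ∩ (H : Set G), ∃ b ∈ T ∩ (H : Set G), ∃ c ∈ U ∩ (H : Set G),
        g = a⁻¹ * b * c}
      {g | ∃ a ∈ S \ (H : Set G), ∃ b ∈ U \ (H : Set G), ∃ c ∈ T ∩ (H : Set G),
        g = a⁻¹ * b * c} := by
  rw [Set.disjoint_left]
  rintro g ⟨a₀, ⟨ha₀S, ha₀H⟩, b₀, ⟨hb₀T, hb₀H⟩, c₀, ⟨hc₀U, hc₀H⟩, rfl⟩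
  rintro ⟨a₁, ⟨ha₁S, ha₁H⟩, u₁, ⟨hu₁U, hu₁H⟩, c₁, ⟨hc₁T, hc₁H⟩, heq⟩
  have hs : a₁ * a₀⁻¹ ∈ rightQuotient S := ⟨a₁, ha₁S, a₀, ha₀S, rfl⟩
  have ht : b₀ * c₁⁻¹ ∈ rightQuotient T := ⟨b₀, hb₀T, c₁, hc₁T, rfl⟩
  have hu : c₀ * u₁⁻¹ ∈ rightQuotient U := ⟨c₀, hc₀U, u₁, hu₁U, rfl⟩
  have hcomm : c₀ * c₁⁻¹ = c₁⁻¹ * c₀ := hab c₀ hc₀H c₁⁻¹ (H.inv_mem hc₁H)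
  have key : (a₁ * a₀⁻¹) * (b₀ * c₁⁻¹) * (c₀ * u₁⁻¹) = 1 := by
    calc (a₁ * a₀⁻¹) * (b₀ * c₁⁻¹) * (c₀ * u₁⁻¹)
        = a₁ * (a₀⁻¹ * b₀) * (c₁⁻¹ * c₀) * u₁⁻¹ := by group
      _ = a₁ * (a₀⁻¹ * b₀) * (c₀ * c₁⁻¹) * u₁⁻¹ := by rw [← hcomm]
      _ = a₁ * (a₀⁻¹ * b₀ * c₀) * c₁⁻¹ * u₁⁻¹ := by group
      _ = a₁ * (a₁⁻¹ * u₁ * c₁) * c₁⁻¹ * u₁⁻¹ := by rw [heq]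
      _ = 1 := by group
  have ha : a₁ * a₀⁻¹ = 1 := ((h _ hs _ ht _ hu).mp key).1
  have : a₁ = a₀ := by
    have := mul_eq_one_iff_eq_inv.mp ha
    simpa using this
  exact ha₁H (this ▸ ha₀H)
end

section
/- If a finite group G realizes ⟨5,5,5⟩ (i.e. has a TPP triple (S,T,U) with |S| = |T| = |U| = 5) and H is a subgroup of index 2 in G, then H realizes ⟨3,3,3⟩ (H has a TPP triple with all three sets of size 3). -/
/-- From a 5-element set and an index-2 subgroup, extract a 3-element set inside
the subgroup which is a right translate of a subset of the original set. -/
lemma extract_three {G : Type*} [Group G] [Fintype G]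
    (H : Subgroup G) (hidx : H.index = 2) (X : Set G) (hX : X.ncard = 5) :
    ∃ (Y : Set G) (c : G), Y ⊆ (H : Set G) ∧ Y.ncard = 3 ∧
      (fun y => y * c) '' Y ⊆ X := by
  have hfin : X.Finite := Set.toFinite X
  have hsplit := Set.ncard_inter_add_ncard_diff_eq_ncard X (H : Set G) hfin
  rw [hX] at hsplit
  rcases le_or_gt 3 (X ∩ (H : Set G)).ncard with h3 | h3
  · obtain ⟨Y, hYsub, hY3⟩ := Set.exists_subset_card_eq h3
    refine ⟨Y, 1, fun y hy => (hYsub hy).2, hY3, ?_⟩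
    rintro z ⟨y, hy, rfl⟩
    simpa using (hYsub hy).1
  · have hB : 3 ≤ (X \ (H : Set G)).ncard := by omega
    have hBne : (X \ (H : Set G)).Nonempty := by
      rw [← Set.ncard_pos (Set.toFinite _)] at *; omega
    obtain ⟨c, hcX, hcH⟩ := hBne
    set B := X \ (H : Set G) with hBdef
    have hinj : Function.Injective (fun y : G => y * c⁻¹) :=
      fun a b hab => by simpa using hab
    have hBim : ((fun y => y * c⁻¹) '' B).ncard = B.ncard :=
      Set.ncard_image_of_injective _ hinj
    obtain ⟨Y, hYsub, hY3⟩ := Set.exists_subset_card_eq (hBim ▸ hB)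
    refine ⟨Y, c, ?_, hY3, ?_⟩
    · intro y hy
      obtain ⟨b, hb, rfl⟩ := hYsub hy
      have : b * c⁻¹ ∈ H := by
        rw [Subgroup.mul_mem_iff_of_index_two hidx, inv_mem_iff]
        exact iff_of_false hb.2 hcH
      exact this
    · rintro z ⟨y, hy, rfl⟩
      obtain ⟨b, hb, rfl⟩ := hYsub hy
      simpa using hb.1

theorem stmt_13 {G : Type*} [Group G] [Fintype G]
    (S T U : Set G) (h : TPP S T U)
    (hS : S.ncard = 5) (hT : T.ncard = 5) (hU : U.ncard = 5)
    (H : Subgroup G) (hidx : H.index = 2) :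
    ∃ S' T' U' : Set H, TPP S' T' U' ∧
      S'.ncard = 3 ∧ T'.ncard = 3 ∧ U'.ncard = 3 := by
  obtain ⟨YS, a, hYSH, hYS3, hYSsub⟩ := extract_three H hidx S hS
  obtain ⟨YT, b, hYTH, hYT3, hYTsub⟩ := extract_three H hidx T hT
  obtain ⟨YU, c, hYUH, hYU3, hYUsub⟩ := extract_three H hidx U hU
  have himg : ∀ Y : Set G, Y ⊆ (H : Set G) →
      Subtype.val '' {x : H | (x : G) ∈ Y} = Y := by
    intro Y hYH
    ext g; constructor
    · rintro ⟨x, hx, rfl⟩; exact hx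
    · intro hg; exact ⟨⟨g, hYH hg⟩, hg, rfl⟩
  refine ⟨{x : H | (x : G) ∈ YS}, {x : H | (x : G) ∈ YT}, {x : H | (x : G) ∈ YU},
    ?_, ?_, ?_, ?_⟩
  · -- TPP
    have key : ∀ (Y : Set G) (d : G) (X : Set G), Y ⊆ (H : Set G) →
        (fun y => y * d) '' Y ⊆ X →
        ∀ s : H, s ∈ rightQuotient {x : H | (x : G) ∈ Y} →
        (s : G) ∈ rightQuotient X := by
      rintro Y d X hYH hsub s ⟨x, hx, y, hy, rfl⟩
      refine ⟨(x : G) * d, hsub ⟨x, hx, rfl⟩, (y : G) * d, hsub ⟨y, hy, rfl⟩, ?_⟩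
      push_cast
      group
    intro s hs t ht u hu
    have hs' := key YS a S hYSH hYSsub s hs
    have ht' := key YT b T hYTH hYTsub t ht
    have hu' := key YU c U hYUH hYUsub u hu
    have := h _ hs' _ ht' _ hu'
    constructor
    · intro heq
      have h1 : (s : G) * t * u = 1 := by exact_mod_cast congrArg Subtype.val heq
      obtain ⟨e1, e2, e3⟩ := this.mp h1
      exact ⟨Subtype.ext e1, Subtype.ext e2, Subtype.ext e3⟩
    · rintro ⟨rfl, rfl, rfl⟩; simp
  · conv_rhs => rw [← hYS3, ← himg YS hYSH]
    exact (Set.ncard_image_of_injective _ Subtype.val_injective).symm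
  · conv_rhs => rw [← hYT3, ← himg YT hYTH]
    exact (Set.ncard_image_of_injective _ Subtype.val_injective).symm
  · conv_rhs => rw [← hYU3, ← himg YU hYUH]
    exact (Set.ncard_image_of_injective _ Subtype.val_injective).symm
end

section
/- If G is a finite abelian group realizing ⟨n,p,m⟩ via a TPP triple, then npm ≤ |G|; in particular the size of any TPP triple in an abelian group is at most |G|. -/
theorem stmt_15 {G : Type*} [CommGroup G] [Fintype G] (S T U : Set G)
    (h : TPP S T U) :
    S.ncard * T.ncard * U.ncard ≤ Nat.card G := by
  have hf : Function.Injective (fun x : S × T × U => (x.1 : G) * x.2.1 * x.2.2) := by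
    rintro ⟨⟨s, hs⟩, ⟨t, ht⟩, ⟨u, hu⟩⟩ ⟨⟨s', hs'⟩, ⟨t', ht'⟩, ⟨u', hu'⟩⟩ heq
    simp only at heq
    have key : (s * s'⁻¹) * (t * t'⁻¹) * (u * u'⁻¹) = 1 := by
      have : (s * s'⁻¹) * (t * t'⁻¹) * (u * u'⁻¹) = (s * t * u) * (s' * t' * u')⁻¹ := by
        simp [mul_inv_rev, mul_assoc, mul_comm, mul_left_comm]
      rw [this, heq, mul_inv_cancel]
    have := (h (s * s'⁻¹) ⟨s, hs, s', hs', rfl⟩ (t * t'⁻¹) ⟨t, ht, t', ht', rfl⟩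
      (u * u'⁻¹) ⟨u, hu, u', hu', rfl⟩).mp key
    obtain ⟨h1, h2, h3⟩ := this
    have hss : s = s' := by rwa [mul_inv_eq_one] at h1
    have htt : t = t' := by rwa [mul_inv_eq_one] at h2
    have huu : u = u' := by rwa [mul_inv_eq_one] at h3
    simp [hss, htt, huu]
  have := Nat.card_le_card_of_injective _ hf
  simpa [Nat.card_prod, Nat.card_coe_set_eq, mul_assoc] using this
end

section
/- If a finite group G realizes ⟨m,m,m⟩ via a TPP triple, then m(2m−1) ≤ |G|. -/
private lemma my_ncard_prod {α β : Type*} [Fintype α] [Fintype β] (s : Set α) (t : Set β) :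
    (s ×ˢ t).ncard = s.ncard * t.ncard := by
  classical
  simp [Set.ncard_eq_toFinset_card', Set.toFinset_prod]

theorem stmt_16 {G : Type*} [Group G] [Fintype G] (m : ℕ) (S T U : Set G)
    (h : TPP S T U) (hS : S.ncard = m) (hT : T.ncard = m) (hU : U.ncard = m) :
    m * (2 * m - 1) ≤ Nat.card G := by
  rcases Nat.eq_zero_or_pos m with hm | hm
  · simp [hm]
  obtain ⟨s0, hs0⟩ : S.Nonempty := Set.nonempty_of_ncard_ne_zero (by omega)
  obtain ⟨u0, hu0⟩ : U.Nonempty := Set.nonempty_of_ncard_ne_zero (by omega)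
  set A : Set G := (fun p : G × G => s0 * p.1⁻¹ * p.2) '' (S ×ˢ T) with hAdef
  set B : Set G := (fun p : G × G => u0 * p.1⁻¹ * p.2) '' (U ×ˢ T) with hBdef
  have hA : A.ncard = m * m := by
    rw [hAdef, Set.ncard_image_of_injOn, my_ncard_prod, hS, hT]
    rintro ⟨p1, p2⟩ ⟨hp1, hp2⟩ ⟨q1, q2⟩ ⟨hq1, hq2⟩ heq
    simp only at heq hp1 hp2 hq1 hq2
    have h1 : p1⁻¹ * p2 = q1⁻¹ * q2 := by
      rw [mul_assoc, mul_assoc] at heq; exact mul_left_cancel heq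
    have key : (q1 * p1⁻¹) * (p2 * q2⁻¹) * 1 = 1 := by
      rw [mul_one, show q1 * p1⁻¹ * (p2 * q2⁻¹) = q1 * (p1⁻¹ * p2) * q2⁻¹ by group, h1]
      group
    obtain ⟨e1, e2, -⟩ := (h _ ⟨q1, hq1, p1, hp1, rfl⟩ _ ⟨p2, hp2, q2, hq2, rfl⟩ _
      ⟨u0, hu0, u0, hu0, (mul_inv_cancel u0).symm⟩).mp key
    exact Prod.ext (mul_inv_eq_one.mp e1).symm (mul_inv_eq_one.mp e2)
  have hB : B.ncard = m * m := by
    rw [hBdef, Set.ncard_image_of_injOn, my_ncard_prod, hU, hT]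
    rintro ⟨p1, p2⟩ ⟨hp1, hp2⟩ ⟨q1, q2⟩ ⟨hq1, hq2⟩ heq
    simp only at heq hp1 hp2 hq1 hq2
    have h1 : p1⁻¹ * p2 = q1⁻¹ * q2 := by
      rw [mul_assoc, mul_assoc] at heq; exact mul_left_cancel heq
    have key : (1 : G) * (p2 * q2⁻¹) * (q1 * p1⁻¹) = 1 := by
      rw [one_mul, show p2 * q2⁻¹ * (q1 * p1⁻¹) = p2 * (q2⁻¹ * q1) * p1⁻¹ by group,
        show q2⁻¹ * q1 = p2⁻¹ * p1 by
          rw [← inv_inv q1, ← mul_inv_rev, ← h1, mul_inv_rev, inv_inv]]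
      group
    obtain ⟨-, e2, e1⟩ := (h _ ⟨s0, hs0, s0, hs0, (mul_inv_cancel s0).symm⟩ _
      ⟨p2, hp2, q2, hq2, rfl⟩ _ ⟨q1, hq1, p1, hp1, rfl⟩).mp key
    exact Prod.ext (mul_inv_eq_one.mp e1).symm (mul_inv_eq_one.mp e2)
  have hAB : A ∩ B ⊆ T := by
    rintro g ⟨⟨⟨s, t⟩, ⟨hs, ht⟩, rfl⟩, ⟨⟨u, t'⟩, ⟨hu, ht'⟩, heq⟩⟩
    simp only at heq hs ht hu ht' ⊢
    have key : (s0 * s⁻¹) * (t * t'⁻¹) * (u * u0⁻¹) = 1 := by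
      rw [show (s0 * s⁻¹) * (t * t'⁻¹) * (u * u0⁻¹) = (s0 * s⁻¹ * t) * (u0 * u⁻¹ * t')⁻¹ by
        group, heq, mul_inv_cancel]
    obtain ⟨e1, -, -⟩ := (h _ ⟨s0, hs0, s, hs, rfl⟩ _ ⟨t, ht, t', ht', rfl⟩ _
      ⟨u, hu, u0, hu0, rfl⟩).mp key
    have : s0 = s := mul_inv_eq_one.mp e1
    rw [← this, mul_inv_cancel, one_mul]
    exact ht
  have hfin : ∀ X : Set G, X.Finite := fun X => Set.toFinite X
  have hunion := Set.ncard_union_add_ncard_inter A B (hfin A) (hfin B)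
  have hU1 : (A ∪ B).ncard ≤ Nat.card G := by
    rw [← Set.ncard_univ]
    exact Set.ncard_le_ncard (Set.subset_univ _) (hfin _)
  have hI1 : (A ∩ B).ncard ≤ m := hT ▸ Set.ncard_le_ncard hAB (hfin _)
  have := hunion
  rw [hA, hB] at this
  have hexp : m * (2 * m - 1) = 2 * (m * m) - m := by
    rw [Nat.mul_sub, mul_one]; ring_nf
  omega
end

section
/- Let G be a group with a TPP triple (S,T,U) and H an abelian subgroup of index 2, with S₀ = S∩H, T₀ = T∩H, U₀ = U∩H, S₁ = S∖H, T₁ = T∖H, U₁ = U∖H, all of S₀, T₀, U₀ containing 1 and nonempty S₁, T₁, U₁. Then |H| ≥ |S₀||T₀||U₀| + |S₁||U₁| + |S₁||T₁|. -/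
lemma memQ {G : Type*} [Group G] {X : Set G} {x y : G} (hx : x ∈ X) (hy : y ∈ X) :
    x * y⁻¹ ∈ rightQuotient X := ⟨x, hx, y, hy, rfl⟩

lemma ncard_prod' {α β : Type*} (s : Set α) (t : Set β) :
    (s ×ˢ t).ncard = s.ncard * t.ncard := by
  rw [← Nat.card_coe_set_eq, ← Nat.card_coe_set_eq, ← Nat.card_coe_set_eq, ← Nat.card_prod]
  exact Nat.card_congr (Equiv.Set.prod s t)

theorem stmt_19 {G : Type*} [Group G] [Fintype G] (S T U : Set G) (h : TPP S T U)
    (hb : (1 : G) ∈ S ∩ T ∩ U)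
    (H : Subgroup G) (hidx : H.index = 2)
    (hab : ∀ x ∈ H, ∀ y ∈ H, x * y = y * x)
    (hS1 : (S \ (H : Set G)).Nonempty) (hT1 : (T \ (H : Set G)).Nonempty)
    (hU1 : (U \ (H : Set G)).Nonempty) :
    (S ∩ (H : Set G)).ncard * (T ∩ (H : Set G)).ncard * (U ∩ (H : Set G)).ncard +
      (S \ (H : Set G)).ncard * (U \ (H : Set G)).ncard +
      (S \ (H : Set G)).ncard * (T \ (H : Set G)).ncard ≤ Nat.card H := by
  obtain ⟨⟨h1S, h1T⟩, h1U⟩ := hb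
  set S₀ := S ∩ (H : Set G)
  set T₀ := T ∩ (H : Set G)
  set U₀ := U ∩ (H : Set G)
  set S₁ := S \ (H : Set G)
  set T₁ := T \ (H : Set G)
  set U₁ := U \ (H : Set G)
  set A : Set G := (fun p : G × G × G => p.1⁻¹ * p.2.1 * p.2.2) '' (S₀ ×ˢ T₀ ×ˢ U₀) with hA
  set B : Set G := (fun p : G × G => p.1⁻¹ * p.2) '' (S₁ ×ˢ U₁) with hB
  set C : Set G := (fun p : G × G => p.1⁻¹ * p.2) '' (S₁ ×ˢ T₁) with hC
  have hmul : ∀ x y : G, x ∉ H → y ∉ H → x * y ∈ H := by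
    intro x y hx hy
    rw [Subgroup.mul_mem_iff_of_index_two hidx]
    exact iff_of_false hx hy
  -- memberships in H
  have hAH : A ⊆ (H : Set G) := by
    rintro _ ⟨⟨s, t, u⟩, ⟨hs, ht, hu⟩, rfl⟩
    exact H.mul_mem (H.mul_mem (H.inv_mem hs.2) ht.2) hu.2
  have hBH : B ⊆ (H : Set G) := by
    rintro _ ⟨⟨s, u⟩, ⟨hs, hu⟩, rfl⟩
    exact hmul _ _ (fun hh => hs.2 (by simpa using H.inv_mem hh)) hu.2
  have hCH : C ⊆ (H : Set G) := by
    rintro _ ⟨⟨s, t⟩, ⟨hs, ht⟩, rfl⟩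
    exact hmul _ _ (fun hh => hs.2 (by simpa using H.inv_mem hh)) ht.2
  -- generic TPP application
  have hT3 : ∀ {a b c d e f : G}, a ∈ S → b ∈ S → c ∈ T → d ∈ T → e ∈ U → f ∈ U →
      a * b⁻¹ * (c * d⁻¹) * (e * f⁻¹) = 1 → a = b ∧ c = d ∧ e = f := by
    intro a b c d e f ha hb' hc hd he hf heq
    obtain ⟨e1, e2, e3⟩ := (h _ (memQ ha hb') _ (memQ hc hd) _ (memQ he hf)).mp heq
    rw [mul_inv_eq_one] at e1 e2 e3
    exact ⟨e1, e2, e3⟩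
  -- injectivity on A
  have hinjA : Set.InjOn (fun p : G × G × G => p.1⁻¹ * p.2.1 * p.2.2) (S₀ ×ˢ T₀ ×ˢ U₀) := by
    rintro ⟨s, t, u⟩ ⟨hs, ht, hu⟩ ⟨s', t', u'⟩ ⟨hs', ht', hu'⟩ key
    simp only at key
    have e1 : t'⁻¹ * u = u * t'⁻¹ := hab _ (H.inv_mem ht'.2) _ hu.2
    have e2 : u' * t'⁻¹ = t'⁻¹ * u' := hab _ hu'.2 _ (H.inv_mem ht'.2)
    have hone : s' * s⁻¹ * (t * t'⁻¹) * (u * u'⁻¹) = 1 := by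
      calc s' * s⁻¹ * (t * t'⁻¹) * (u * u'⁻¹)
          = s' * (s⁻¹ * t * (t'⁻¹ * u)) * u'⁻¹ := by group
        _ = s' * (s⁻¹ * t * (u * t'⁻¹)) * u'⁻¹ := by rw [e1]
        _ = s' * (s⁻¹ * t * u) * (t'⁻¹ * u'⁻¹) := by group
        _ = s' * (s'⁻¹ * t' * u') * (t'⁻¹ * u'⁻¹) := by rw [key]
        _ = t' * (u' * t'⁻¹) * u'⁻¹ := by group
        _ = t' * (t'⁻¹ * u') * u'⁻¹ := by rw [e2]
        _ = 1 := by group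
    obtain ⟨e, f, g⟩ := hT3 hs'.1 hs.1 ht.1 ht'.1 hu.1 hu'.1 hone
    · simp only [Prod.mk.injEq]; exact ⟨e.symm, f, g⟩
  -- injectivity on B
  have hinjB : Set.InjOn (fun p : G × G => p.1⁻¹ * p.2) (S₁ ×ˢ U₁) := by
    rintro ⟨s, u⟩ ⟨hs, hu⟩ ⟨s', u'⟩ ⟨hs', hu'⟩ key
    simp only at key
    have hone : s' * s⁻¹ * (1 * 1⁻¹) * (u * u'⁻¹) = 1 := by
      calc s' * s⁻¹ * (1 * 1⁻¹) * (u * u'⁻¹) = s' * (s⁻¹ * u) * u'⁻¹ := by group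
        _ = s' * (s'⁻¹ * u') * u'⁻¹ := by rw [key]
        _ = 1 := by group
    obtain ⟨e, _, g⟩ := hT3 hs'.1 hs.1 h1T h1T hu.1 hu'.1 hone
    · simp only [Prod.mk.injEq]; exact ⟨e.symm, g⟩
  -- injectivity on C
  have hinjC : Set.InjOn (fun p : G × G => p.1⁻¹ * p.2) (S₁ ×ˢ T₁) := by
    rintro ⟨s, t⟩ ⟨hs, ht⟩ ⟨s', t'⟩ ⟨hs', ht'⟩ key
    simp only at key
    have hone : s' * s⁻¹ * (t * t'⁻¹) * (1 * 1⁻¹) = 1 := by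
      calc s' * s⁻¹ * (t * t'⁻¹) * (1 * 1⁻¹) = s' * (s⁻¹ * t) * t'⁻¹ := by group
        _ = s' * (s'⁻¹ * t') * t'⁻¹ := by rw [key]
        _ = 1 := by group
    obtain ⟨e, f, _⟩ := hT3 hs'.1 hs.1 ht.1 ht'.1 h1U h1U hone
    · simp only [Prod.mk.injEq]; exact ⟨e.symm, f⟩
  -- disjointness A, B
  have hAB : Disjoint A B := by
    rw [Set.disjoint_left]
    rintro _ ⟨⟨s, t, u⟩, ⟨hs, ht, hu⟩, rfl⟩ ⟨⟨s', u'⟩, ⟨hs', hu'⟩, key⟩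
    simp only at key
    have hone : s' * s⁻¹ * (t * 1⁻¹) * (u * u'⁻¹) = 1 := by
      calc s' * s⁻¹ * (t * 1⁻¹) * (u * u'⁻¹) = s' * (s⁻¹ * t * u) * u'⁻¹ := by group
        _ = s' * (s'⁻¹ * u') * u'⁻¹ := by rw [← key]
        _ = 1 := by group
    obtain ⟨e, _, _⟩ := hT3 hs'.1 hs.1 ht.1 h1T hu.1 hu'.1 hone
    exact hs'.2 (e ▸ hs.2)
  -- disjointness A, C
  have hAC : Disjoint A C := by
    rw [Set.disjoint_left]
    rintro _ ⟨⟨s, t, u⟩, ⟨hs, ht, hu⟩, rfl⟩ ⟨⟨s', t'⟩, ⟨hs', ht'⟩, key⟩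
    simp only at key
    have e1 : u * t⁻¹ = t⁻¹ * u := hab _ hu.2 _ (H.inv_mem ht.2)
    have hone : s * s'⁻¹ * (t' * t⁻¹) * (1 * u⁻¹) = 1 := by
      calc s * s'⁻¹ * (t' * t⁻¹) * (1 * u⁻¹)
          = s * (s'⁻¹ * t') * t⁻¹ * u⁻¹ := by group
        _ = s * (s⁻¹ * t * u) * t⁻¹ * u⁻¹ := by rw [← key]
        _ = t * (u * t⁻¹) * u⁻¹ := by group
        _ = t * (t⁻¹ * u) * u⁻¹ := by rw [e1]
        _ = 1 := by group
    obtain ⟨e, _, _⟩ := hT3 hs.1 hs'.1 ht'.1 ht.1 h1U hu.1 hone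
    exact hs'.2 (e ▸ hs.2)
  -- disjointness B, C
  have hBC : Disjoint B C := by
    rw [Set.disjoint_left]
    rintro _ ⟨⟨s, u⟩, ⟨hs, hu⟩, rfl⟩ ⟨⟨s', t'⟩, ⟨hs', ht'⟩, key⟩
    simp only at key
    have hone : s * s'⁻¹ * (t' * 1⁻¹) * (1 * u⁻¹) = 1 := by
      calc s * s'⁻¹ * (t' * 1⁻¹) * (1 * u⁻¹) = s * (s'⁻¹ * t') * u⁻¹ := by group
        _ = s * (s⁻¹ * u) * u⁻¹ := by rw [← key]
        _ = 1 := by group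
    obtain ⟨_, e, _⟩ := hT3 hs.1 hs'.1 ht'.1 h1T h1U hu.1 hone
    exact ht'.2 (e ▸ H.one_mem)
  -- cardinalities
  have hcardA : A.ncard = S₀.ncard * T₀.ncard * U₀.ncard := by
    rw [hA, Set.ncard_image_of_injOn hinjA, ncard_prod', ncard_prod', mul_assoc]
  have hcardB : B.ncard = S₁.ncard * U₁.ncard := by
    rw [hB, Set.ncard_image_of_injOn hinjB, ncard_prod']
  have hcardC : C.ncard = S₁.ncard * T₁.ncard := by
    rw [hC, Set.ncard_image_of_injOn hinjC, ncard_prod']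
  have hUnion : (A ∪ B ∪ C).ncard = A.ncard + B.ncard + C.ncard := by
    rw [Set.ncard_union_eq (Set.disjoint_union_left.mpr ⟨hAC, hBC⟩),
      Set.ncard_union_eq hAB]
  have hsub : A ∪ B ∪ C ⊆ (H : Set G) := by
    intro x hx
    rcases hx with (hx | hx) | hx
    · exact hAH hx
    · exact hBH hx
    · exact hCH hx
  have hle : (A ∪ B ∪ C).ncard ≤ (H : Set G).ncard :=
    Set.ncard_le_ncard hsub (Set.toFinite _)
  have hcardH : Nat.card H = (H : Set G).ncard := by
    rw [← SetLike.coe_sort_coe, Nat.card_coe_set_eq]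
  rw [hcardH]
  calc S₀.ncard * T₀.ncard * U₀.ncard + S₁.ncard * U₁.ncard + S₁.ncard * T₁.ncard
      = A.ncard + B.ncard + C.ncard := by rw [hcardA, hcardB, hcardC]
    _ = (A ∪ B ∪ C).ncard := hUnion.symm
    _ ≤ (H : Set G).ncard := hle
end
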